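/- arXiv:1804.05562 — 8 statements merged into one kernel-verified Lean document; each statement's English description precedes it below -/
import Mathlib

section
/- Let g be a finite-dimensional nilpotent Lie algebra with [g,g] ≠ {0}. Then there exists a linear functional ξ ∈ g* such that ξ does not vanish identically on [g,g], the commutator ideal [g,g] is contained in the coadjoint isotropy subalgebra g(ξ) = {X ∈ g : ξ([X, g]) = 0}, and g(ξ) is an ideal of g. -/
open Module

/-- The coadjoint isotropy subalgebra `g(ξ) = {X ∈ g : ξ([X,Y]) = 0 for all Y}`. -/
noncomputable def coadjointIsotropy {L : Type*} [LieRing L] [LieAlgebra ℝ L]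
    (ξ : Module.Dual ℝ L) : Submodule ℝ L where
  carrier := {X | ∀ Y : L, ξ ⁅X, Y⁆ = 0}
  add_mem' := by
    intro a b ha hb Y
    simp [add_lie, ha Y, hb Y]
  zero_mem' := by intro Y; simp
  smul_mem' := by
    intro c a ha Y
    simp [smul_lie, ha Y]

/-! Take `ξ` vanishing on `C²g = [g,[g,g]]` but not on `[g,g]`; such a `ξ` exists because
nilpotency forces `C²g ⊊ [g,g]`. Then `ξ([X,Y]) = 0` whenever `X ∈ [g,g]`, so `[g,g] ⊆ g(ξ)`,
and `g(ξ)` is an ideal because it already contains every bracket `[Z,X]`. -/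

namespace LieModule

variable {R L M : Type*} [CommRing R] [LieRing L] [LieAlgebra R L] [AddCommGroup M] [Module R M]
  [LieRingModule L M]

lemma lowerCentralSeries_add_eq_of_succ_eq {k : ℕ}
    (h : lowerCentralSeries R L M (k + 1) = lowerCentralSeries R L M k) (n : ℕ) :
    lowerCentralSeries R L M (k + n) = lowerCentralSeries R L M k := by
  induction n with
  | zero => rfl
  | succ n ih => rw [← add_assoc, lowerCentralSeries_succ, ih, ← lowerCentralSeries_succ, h]

lemma lowerCentralSeries_succ_lt [LieModule R L M] [IsNilpotent L M] {k : ℕ}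
    (h : lowerCentralSeries R L M k ≠ ⊥) :
    lowerCentralSeries R L M (k + 1) < lowerCentralSeries R L M k := by
  refine (antitone_lowerCentralSeries R L M k.le_succ).lt_of_ne fun heq => h ?_
  obtain ⟨m, hm⟩ := IsNilpotent.nilpotent R L M
  rw [← lowerCentralSeries_add_eq_of_succ_eq heq m, eq_bot_iff, ← hm]
  exact antitone_lowerCentralSeries R L M (Nat.le_add_left m k)

lemma lie_mem_lowerCentralSeries_succ (x : L) {m : M} {k : ℕ}
    (hm : m ∈ lowerCentralSeries R L M k) : ⁅x, m⁆ ∈ lowerCentralSeries R L M (k + 1) := by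
  rw [lowerCentralSeries_succ]
  exact LieSubmodule.lie_mem_lie (LieSubmodule.mem_top x) hm

lemma lie_mem_lowerCentralSeries_one (x : L) (m : M) : ⁅x, m⁆ ∈ lowerCentralSeries R L M 1 :=
  lie_mem_lowerCentralSeries_succ x (LieSubmodule.mem_top m)

end LieModule

open LieModule

lemma lowerCentralSeries_one_le_coadjointIsotropy {L : Type*} [LieRing L] [LieAlgebra ℝ L]
    {ξ : Module.Dual ℝ L} (hξ : (lowerCentralSeries ℝ L L 2).toSubmodule ≤ LinearMap.ker ξ) :
    (lowerCentralSeries ℝ L L 1).toSubmodule ≤ coadjointIsotropy ξ := fun X hX Y =>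
  hξ <| by
    rw [← lie_skew, neg_mem_iff]
    exact lie_mem_lowerCentralSeries_succ Y hX

theorem stmt_3_general {L : Type*} [LieRing L] [LieAlgebra ℝ L]
    (hnil : LieRing.IsNilpotent L)
    (hcomm : LieAlgebra.derivedSeries ℝ L 1 ≠ ⊥) :
    ∃ ξ : Module.Dual ℝ L,
      ¬ (∀ x ∈ LieAlgebra.derivedSeries ℝ L 1, ξ x = 0) ∧
      (LieAlgebra.derivedSeries ℝ L 1).toSubmodule ≤ coadjointIsotropy ξ ∧
      (∀ z : L, ∀ x ∈ coadjointIsotropy ξ, ⁅z, x⁆ ∈ coadjointIsotropy ξ) := by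
  have hD : LieAlgebra.derivedSeries ℝ L 1 = lowerCentralSeries ℝ L L 1 := by simp
  obtain ⟨v, hv1, hv2⟩ := SetLike.exists_of_lt (lowerCentralSeries_succ_lt (hD ▸ hcomm))
  obtain ⟨ξ, hξv, hξ⟩ :=
    Submodule.exists_le_ker_of_notMem (p := (lowerCentralSeries ℝ L L 2).toSubmodule) hv2
  have hiso := lowerCentralSeries_one_le_coadjointIsotropy hξ
  exact ⟨ξ, fun h => hξv (h v (hD ▸ hv1)), hD ▸ hiso,
    fun z x _ => hiso (lie_mem_lowerCentralSeries_one z x)⟩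

/-- If `g` is a finite-dimensional nilpotent Lie algebra with `[g,g] ≠ 0`, then there is
`ξ ∈ g*` not vanishing on `[g,g]` with `[g,g] ⊆ g(ξ)`, and `g(ξ)` is an ideal of `g`. -/
theorem stmt_3 {L : Type*} [LieRing L] [LieAlgebra ℝ L] [FiniteDimensional ℝ L]
    (hnil : LieRing.IsNilpotent L)
    (hcomm : LieAlgebra.derivedSeries ℝ L 1 ≠ ⊥) :
    ∃ ξ : Module.Dual ℝ L,
      ¬ (∀ x ∈ LieAlgebra.derivedSeries ℝ L 1, ξ x = 0) ∧
      (LieAlgebra.derivedSeries ℝ L 1).toSubmodule ≤ coadjointIsotropy ξ ∧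
      (∀ z : L, ∀ x ∈ coadjointIsotropy ξ, ⁅z, x⁆ ∈ coadjointIsotropy ξ) :=
  stmt_3_general hnil hcomm
end

section
/- Let g be a finite-dimensional nilpotent Lie algebra of class T, meaning that for all ξ ∈ g* not vanishing on [g,g], the coadjoint isotropy subalgebra g(ξ) has dimension equal to ind g := min{dim g(η) : η ∈ g*}. Then dim g ≤ ind g + dim [g,g]^⊥, equivalently dim [g,g] ≤ ind g. -/
open Module

/-- `ind g := min {dim g(ξ) : ξ ∈ g*}`. -/
noncomputable def lieIndex (L : Type*) [LieRing L] [LieAlgebra ℝ L] : ℕ :=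
  sInf (Set.range fun ξ : Module.Dual ℝ L => finrank ℝ (coadjointIsotropy ξ))

/-- `g` is of class `T` if `dim g(ξ) = ind g` for every `ξ ∈ g*` not vanishing on `[g,g]`. -/
def IsClassT (L : Type*) [LieRing L] [LieAlgebra ℝ L] : Prop :=
  ∀ ξ : Module.Dual ℝ L,
    ¬ (∀ x ∈ LieAlgebra.derivedSeries ℝ L 1, ξ x = 0) →
      finrank ℝ (coadjointIsotropy ξ) = lieIndex L

/-!
If `[g,g] ≠ 0`, nilpotency makes `[g,[g,g]]` a proper subspace of `[g,g]`, so some `ξ ∈ g*`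
vanishes on `[g,[g,g]]` but not on `[g,g]`. For such `ξ` we have `ξ([X,Y]) = 0` whenever
`X ∈ [g,g]`, i.e. `[g,g] ⊆ g(ξ)`, and the class `T` condition gives `dim g(ξ) = ind g`.
-/

namespace LieSubmodule

variable {R L M : Type*} [CommRing R] [LieRing L] [LieAlgebra R L] [AddCommGroup M] [Module R M]
  [LieRingModule L M] [LieModule R L M]

theorem eq_bot_of_lie_top_eq_self [LieModule.IsNilpotent L M] {N : LieSubmodule R L M}
    (h : ⁅(⊤ : LieIdeal R L), N⁆ = N) : N = ⊥ := by
  have lcs_eq_self : ∀ k, N.lcs k = N := by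
    intro k
    induction k with
    | zero => rfl
    | succ k ih => rw [lcs_succ, ih, h]
  obtain ⟨k, hk⟩ := (LieModule.isNilpotent_iff_exists_ucs_eq_top (R := R) (L := L) (M := M)).mp ‹_›
  rw [_root_.eq_bot_iff, ← lcs_eq_self k, lcs_le_iff, hk]
  exact le_top

end LieSubmodule

theorem LieModule.exists_dual_vanishing_on_lie_top_of_ne_bot {K L M : Type*} [Field K]
    [LieRing L] [LieAlgebra K L] [AddCommGroup M] [Module K M] [LieRingModule L M]
    [LieModule K L M] [LieModule.IsNilpotent L M] {N : LieSubmodule K L M} (hN : N ≠ ⊥) :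
    ∃ f : Dual K M, (∀ m ∈ ⁅(⊤ : LieIdeal K L), N⁆, f m = 0) ∧ ∃ m ∈ N, f m ≠ 0 := by
  have hlt : ⁅(⊤ : LieIdeal K L), N⁆ < N :=
    lt_of_le_of_ne (LieSubmodule.lie_le_right N ⊤)
      (mt LieSubmodule.eq_bot_of_lie_top_eq_self hN)
  obtain ⟨m, hmN, hm⟩ := SetLike.exists_of_lt hlt
  obtain ⟨f, hfm, hf⟩ := Submodule.exists_dual_map_eq_bot_of_notMem
    (p := (⁅(⊤ : LieIdeal K L), N⁆ : LieSubmodule K L M).toSubmodule) hm inferInstance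
  exact ⟨f, fun x hx => LinearMap.mem_ker.mp (LinearMap.le_ker_iff_map.mpr hf hx), m, hmN, hfm⟩

theorem le_coadjointIsotropy {L : Type*} [LieRing L] [LieAlgebra ℝ L] {I : LieIdeal ℝ L}
    {ξ : Dual ℝ L} (hξ : ∀ x ∈ ⁅(⊤ : LieIdeal ℝ L), I⁆, ξ x = 0) :
    I.toSubmodule ≤ coadjointIsotropy ξ := by
  intro X hX Y
  rw [← lie_skew, map_neg, hξ _ (LieSubmodule.lie_mem_lie (LieSubmodule.mem_top Y) hX), neg_zero]

theorem finrank_derivedSeries_one_le_lieIndex {L : Type*} [LieRing L] [LieAlgebra ℝ L]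
    [FiniteDimensional ℝ L] [LieRing.IsNilpotent L] (hT : IsClassT L) :
    finrank ℝ (LieAlgebra.derivedSeries ℝ L 1).toSubmodule ≤ lieIndex L := by
  set D := LieAlgebra.derivedSeries ℝ L 1
  rcases eq_or_ne D ⊥ with hD | hD
  · rw [hD]
    simp
  obtain ⟨ξ, hξ, x, hxD, hξx⟩ := LieModule.exists_dual_vanishing_on_lie_top_of_ne_bot hD
  calc finrank ℝ D.toSubmodule ≤ finrank ℝ (coadjointIsotropy ξ) :=
        Submodule.finrank_mono (le_coadjointIsotropy hξ)
    _ = lieIndex L := hT ξ fun h => hξx (h x hxD)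

theorem stmt_4 {L : Type*} [LieRing L] [LieAlgebra ℝ L] [FiniteDimensional ℝ L]
    (hnil : LieRing.IsNilpotent L) (hT : IsClassT L) :
    finrank ℝ L ≤ lieIndex L +
      finrank ℝ ((LieAlgebra.derivedSeries ℝ L 1).toSubmodule.dualAnnihilator) ∧
    finrank ℝ (LieAlgebra.derivedSeries ℝ L 1).toSubmodule ≤ lieIndex L := by
  have key := finrank_derivedSeries_one_le_lieIndex hT
  have hdual := Subspace.finrank_add_finrank_dualAnnihilator_eq
    (LieAlgebra.derivedSeries ℝ L 1).toSubmodule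
  exact ⟨by omega, key⟩
end

section
/- Let g = g₁ × g₂ be a product of finite-dimensional nilpotent Lie algebras. If g is of class T (i.e., dim g(ξ) = min_{η} dim g(η) for every ξ ∈ g* not vanishing on [g,g]), then at least one of g₁ and g₂ is abelian. -/
open Module

/-- The product of two Lie rings. -/
instance prodLieRing {L₁ L₂ : Type*} [LieRing L₁] [LieRing L₂] : LieRing (L₁ × L₂) where
  bracket x y := (⁅x.1, y.1⁆, ⁅x.2, y.2⁆)
  add_lie x y z := by ext <;> simp [add_lie]
  lie_add x y z := by ext <;> simp [lie_add]
  lie_self x := by ext <;> simp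
  leibniz_lie x y z := by
    ext
    · exact leibniz_lie x.1 y.1 z.1
    · exact leibniz_lie x.2 y.2 z.2

/-- The product of two Lie algebras. -/
instance prodLieAlgebra {L₁ L₂ : Type*} [LieRing L₁] [LieRing L₂]
    [LieAlgebra ℝ L₁] [LieAlgebra ℝ L₂] : LieAlgebra ℝ (L₁ × L₂) where
  lie_smul t x y := by
    ext
    · exact lie_smul t x.1 y.1
    · exact lie_smul t x.2 y.2

/-!
If neither factor is abelian, choose `ξ₁ ∈ g₁*` with `ξ₁ ⁅a, b⁆ ≠ 0` and put `ξ = (ξ₁, 0)`, which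
does not vanish on `[g, g]`. Then `g(ξ) = g₁(ξ₁) × g₂`, so
`dim g(ξ) ≥ ind g₁ + dim g₂ > ind g₁ + ind g₂ ≥ ind g`, the strict inequality because a
non-abelian `g₂` has some `g₂(η) ≠ g₂`. Thus `ξ` contradicts class `T`.
-/

namespace Submodule

variable {R M N : Type*} [Semiring R] [AddCommMonoid M] [AddCommMonoid N] [Module R M]
  [Module R N]

def prodEquivProd (p : Submodule R M) (q : Submodule R N) : p.prod q ≃ₗ[R] p × q where
  toFun x := (⟨x.1.1, x.2.1⟩, ⟨x.1.2, x.2.2⟩)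
  invFun y := ⟨(y.1.1, y.2.1), ⟨y.1.2, y.2.2⟩⟩
  map_add' _ _ := rfl
  map_smul' _ _ := rfl
  left_inv _ := rfl
  right_inv _ := rfl

theorem finrank_prod {K M N : Type*} [DivisionRing K] [AddCommGroup M] [AddCommGroup N]
    [Module K M] [Module K N] [FiniteDimensional K M] [FiniteDimensional K N]
    (p : Submodule K M) (q : Submodule K N) :
    finrank K (p.prod q) = finrank K p + finrank K q := by
  rw [(prodEquivProd p q).finrank_eq, Module.finrank_prod]

end Submodule

@[simp]
theorem prod_lie {L₁ L₂ : Type*} [LieRing L₁] [LieRing L₂] (x y : L₁ × L₂) :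
    ⁅x, y⁆ = (⁅x.1, y.1⁆, ⁅x.2, y.2⁆) := rfl

section CoadjointIsotropy

variable {L L₁ L₂ : Type*} [LieRing L] [LieAlgebra ℝ L] [LieRing L₁] [LieRing L₂]
  [LieAlgebra ℝ L₁] [LieAlgebra ℝ L₂]

theorem mem_coadjointIsotropy {ξ : Module.Dual ℝ L} {X : L} :
    X ∈ coadjointIsotropy ξ ↔ ∀ Y, ξ ⁅X, Y⁆ = 0 := Iff.rfl

@[simp]
theorem coadjointIsotropy_zero : coadjointIsotropy (0 : Module.Dual ℝ L) = ⊤ := by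
  ext
  simp [mem_coadjointIsotropy]

theorem coadjointIsotropy_coprod (ξ₁ : Module.Dual ℝ L₁) (ξ₂ : Module.Dual ℝ L₂) :
    coadjointIsotropy (ξ₁.coprod ξ₂) = (coadjointIsotropy ξ₁).prod (coadjointIsotropy ξ₂) := by
  ext ⟨a, b⟩
  simp only [Submodule.mem_prod, mem_coadjointIsotropy, Prod.forall, prod_lie,
    LinearMap.coprod_apply]
  constructor
  · intro h
    exact ⟨fun c ↦ by simpa using h c 0, fun d ↦ by simpa using h 0 d⟩
  · rintro ⟨h₁, h₂⟩ c d
    rw [h₁, h₂, add_zero]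

theorem finrank_coadjointIsotropy_coprod [FiniteDimensional ℝ L₁] [FiniteDimensional ℝ L₂]
    (ξ₁ : Module.Dual ℝ L₁) (ξ₂ : Module.Dual ℝ L₂) :
    finrank ℝ (coadjointIsotropy (ξ₁.coprod ξ₂)) =
      finrank ℝ (coadjointIsotropy ξ₁) + finrank ℝ (coadjointIsotropy ξ₂) := by
  rw [coadjointIsotropy_coprod, Submodule.finrank_prod]

theorem lieIndex_le_finrank_coadjointIsotropy (ξ : Module.Dual ℝ L) :
    lieIndex L ≤ finrank ℝ (coadjointIsotropy ξ) :=
  Nat.sInf_le ⟨ξ, rfl⟩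

theorem exists_finrank_coadjointIsotropy_eq_lieIndex (L : Type*) [LieRing L] [LieAlgebra ℝ L] :
    ∃ ξ : Module.Dual ℝ L, finrank ℝ (coadjointIsotropy ξ) = lieIndex L :=
  Nat.sInf_mem (Set.range_nonempty _)

theorem lieIndex_prod_le [FiniteDimensional ℝ L₁] [FiniteDimensional ℝ L₂] :
    lieIndex (L₁ × L₂) ≤ lieIndex L₁ + lieIndex L₂ := by
  obtain ⟨η₁, hη₁⟩ := exists_finrank_coadjointIsotropy_eq_lieIndex L₁
  obtain ⟨η₂, hη₂⟩ := exists_finrank_coadjointIsotropy_eq_lieIndex L₂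
  calc lieIndex (L₁ × L₂) ≤ finrank ℝ (coadjointIsotropy (η₁.coprod η₂)) :=
        lieIndex_le_finrank_coadjointIsotropy _
    _ = lieIndex L₁ + lieIndex L₂ := by rw [finrank_coadjointIsotropy_coprod, hη₁, hη₂]

theorem exists_dual_apply_lie_ne_zero (h : ¬ IsLieAbelian L) :
    ∃ (ξ : Module.Dual ℝ L) (a b : L), ξ ⁅a, b⁆ ≠ 0 := by
  obtain ⟨a, b, hab⟩ : ∃ a b : L, ⁅a, b⁆ ≠ 0 := by
    by_contra! hc
    exact h ⟨hc⟩
  obtain ⟨ξ, hξ⟩ := not_forall.mp ((Module.forall_dual_apply_eq_zero_iff ℝ _).not.mpr hab)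
  exact ⟨ξ, a, b, hξ⟩

theorem lieIndex_lt_finrank_of_not_isLieAbelian [FiniteDimensional ℝ L] (h : ¬ IsLieAbelian L) :
    lieIndex L < finrank ℝ L := by
  obtain ⟨ξ, a, b, hab⟩ := exists_dual_apply_lie_ne_zero h
  have hne : coadjointIsotropy ξ ≠ ⊤ := fun htop ↦
    hab (mem_coadjointIsotropy.mp (htop ▸ Submodule.mem_top) b)
  exact (lieIndex_le_finrank_coadjointIsotropy ξ).trans_lt (Submodule.finrank_lt hne)

theorem not_forall_derivedSeries_one_coprod_zero {ξ₁ : Module.Dual ℝ L₁} {a b : L₁}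
    (hab : ξ₁ ⁅a, b⁆ ≠ 0) :
    ¬ ∀ x ∈ LieAlgebra.derivedSeries ℝ (L₁ × L₂) 1, ξ₁.coprod (0 : Module.Dual ℝ L₂) x = 0 := by
  intro h
  have hmem : ⁅((a, 0) : L₁ × L₂), (b, 0)⁆ ∈ LieAlgebra.derivedSeries ℝ (L₁ × L₂) 1 :=
    LieSubmodule.lie_mem_lie (LieSubmodule.mem_top _) (LieSubmodule.mem_top _)
  simpa [hab] using h _ hmem

end CoadjointIsotropy

theorem stmt_5_general {L₁ L₂ : Type*} [LieRing L₁] [LieRing L₂]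
    [LieAlgebra ℝ L₁] [LieAlgebra ℝ L₂]
    [FiniteDimensional ℝ L₁] [FiniteDimensional ℝ L₂]
    (hT : IsClassT (L₁ × L₂)) :
    IsLieAbelian L₁ ∨ IsLieAbelian L₂ := by
  by_contra! h
  obtain ⟨hL₁, hL₂⟩ := h
  obtain ⟨ξ₁, a, b, hab⟩ := exists_dual_apply_lie_ne_zero hL₁
  have hξ := hT _ (not_forall_derivedSeries_one_coprod_zero (L₂ := L₂) hab)
  rw [finrank_coadjointIsotropy_coprod, coadjointIsotropy_zero, finrank_top] at hξ
  have := lieIndex_prod_le (L₁ := L₁) (L₂ := L₂)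
  have := lieIndex_le_finrank_coadjointIsotropy ξ₁
  have := lieIndex_lt_finrank_of_not_isLieAbelian hL₂
  omega

/-- If a product `g₁ × g₂` of finite-dimensional nilpotent Lie algebras is of class `T`,
then at least one of `g₁`, `g₂` is abelian. -/
theorem stmt_5 {L₁ L₂ : Type*} [LieRing L₁] [LieRing L₂]
    [LieAlgebra ℝ L₁] [LieAlgebra ℝ L₂]
    [FiniteDimensional ℝ L₁] [FiniteDimensional ℝ L₂]
    (hnil₁ : LieRing.IsNilpotent L₁) (hnil₂ : LieRing.IsNilpotent L₂)
    (hT : IsClassT (L₁ × L₂)) :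
    IsLieAbelian L₁ ∨ IsLieAbelian L₂ :=
  stmt_5_general hT
end

section
/- Let G be a first-countable locally compact group, (K_j)_{j≥1} closed subgroups of G converging in the Fell topology (on the space of closed subgroups) to a closed subgroup K, and φ : G → ℂ a continuous function whose restriction to each K_j is a character (continuous homomorphism to the unit circle 𝕋). Then the restriction of φ to K is a character of K. -/
/-!
Every open set meeting a Fell limit `L` of closed sets `K j` meets `K j` for all large `j`.
Hence a closed condition satisfied on every `K j` (or on every `K j × K j`) also holds on `L`
(resp. `L × L`). Both `‖φ x‖ = 1` and `φ (x * y) = φ x * φ y` are closed conditions, by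
continuity of `φ` and of multiplication.
-/

open Filter Topology TopologicalSpace

def fellTopology (X : Type*) [TopologicalSpace X] : TopologicalSpace (Closeds X) :=
  TopologicalSpace.generateFrom
    {V | ∃ (C : Set X) (𝒮 : Finset (Set X)), IsCompact C ∧ (∀ A ∈ 𝒮, IsOpen A) ∧
      V = {K : Closeds X | (K : Set X) ∩ C = ∅ ∧ ∀ A ∈ 𝒮, ((K : Set X) ∩ A).Nonempty}}

section FellLimits

variable {X ι : Type*} [TopologicalSpace X] {l : Filter ι} {F : ι → Closeds X} {F₀ : Closeds X}

theorem eventually_inter_nonempty_of_tendsto_fell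
    (hF : @Tendsto ι (Closeds X) F l (@nhds _ (fellTopology X) F₀))
    {A : Set X} (hA : IsOpen A) (hF₀A : ((F₀ : Set X) ∩ A).Nonempty) :
    ∀ᶠ i in l, ((F i : Set X) ∩ A).Nonempty := by
  let := fellTopology X
  let V : Set (Closeds X) :=
    {H | (H : Set X) ∩ ∅ = ∅ ∧ ∀ B ∈ ({A} : Finset (Set X)), ((H : Set X) ∩ B).Nonempty}
  have hV : IsOpen V :=
    GenerateOpen.basic _ ⟨∅, {A}, isCompact_empty, by simpa using hA, rfl⟩
  have hF₀V : F₀ ∈ V := ⟨Set.inter_empty _, by simpa using hF₀A⟩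
  filter_upwards [hF (hV.mem_nhds hF₀V)] with i hi
  exact hi.2 A (Finset.mem_singleton_self A)

theorem subset_of_tendsto_fell [l.NeBot]
    (hF : @Tendsto ι (Closeds X) F l (@nhds _ (fellTopology X) F₀))
    {S : Set X} (hS : IsClosed S) (hFS : ∀ᶠ i in l, (F i : Set X) ⊆ S) :
    (F₀ : Set X) ⊆ S := by
  intro x hx
  by_contra hxS
  obtain ⟨i, hiS, y, hyF, hyS⟩ := (hFS.and (eventually_inter_nonempty_of_tendsto_fell hF
    hS.isOpen_compl ⟨x, hx, hxS⟩)).exists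
  exact hyS (hiS hyF)

theorem prod_self_subset_of_tendsto_fell [l.NeBot]
    (hF : @Tendsto ι (Closeds X) F l (@nhds _ (fellTopology X) F₀))
    {S : Set (X × X)} (hS : IsClosed S) (hFS : ∀ᶠ i in l, (F i : Set X) ×ˢ (F i : Set X) ⊆ S) :
    (F₀ : Set X) ×ˢ (F₀ : Set X) ⊆ S := by
  rintro ⟨x, y⟩ ⟨hx, hy⟩
  by_contra hxyS
  obtain ⟨U, V, hU, hV, hxU, hyV, hUV⟩ := isOpen_prod_iff.1 hS.isOpen_compl x y hxyS
  obtain ⟨i, hiS, ⟨a, haF, haU⟩, ⟨b, hbF, hbV⟩⟩ := (hFS.and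
    ((eventually_inter_nonempty_of_tendsto_fell hF hU ⟨x, hx, hxU⟩).and
      (eventually_inter_nonempty_of_tendsto_fell hF hV ⟨y, hy, hyV⟩))).exists
  exact hUV (Set.mk_mem_prod haU hbV) (hiS (Set.mk_mem_prod haF hbF))

end FellLimits

theorem stmt_9_general {G : Type*} [Group G] [TopologicalSpace G] [IsTopologicalGroup G]
    (K : ℕ → Subgroup G) (hKc : ∀ j, IsClosed (K j : Set G))
    (L : Subgroup G) (hLc : IsClosed (L : Set G))
    (hconv : @Filter.Tendsto ℕ (Closeds G)
      (fun j => ⟨(K j : Set G), hKc j⟩) atTop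
      (@nhds _ (fellTopology G) ⟨(L : Set G), hLc⟩))
    (φ : G → ℂ) (hφ : Continuous φ)
    (habs : ∀ j, ∀ x ∈ K j, ‖φ x‖ = 1)
    (hmul : ∀ j, ∀ x ∈ K j, ∀ y ∈ K j, φ (x * y) = φ x * φ y) :
    (∀ x ∈ L, ‖φ x‖ = 1) ∧
    (∀ x ∈ L, ∀ y ∈ L, φ (x * y) = φ x * φ y) := by
  have habs_closed : IsClosed {x | ‖φ x‖ = 1} := isClosed_eq (by fun_prop) continuous_const
  have hmul_closed : IsClosed {p : G × G | φ (p.1 * p.2) = φ p.1 * φ p.2} :=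
    isClosed_eq (by fun_prop) (by fun_prop)
  refine ⟨fun x hx => subset_of_tendsto_fell hconv habs_closed
      (Eventually.of_forall fun j => habs j) hx,
    fun x hx y hy => prod_self_subset_of_tendsto_fell hconv hmul_closed
      (Eventually.of_forall fun j p hp => hmul j p.1 hp.1 p.2 hp.2) (Set.mk_mem_prod hx hy)⟩

/-- Let `G` be a first-countable locally compact group, `(K j)` closed subgroups converging
in the Fell topology to a closed subgroup `L`, and `φ : G → ℂ` continuous with `φ|_{K j}` a
character of `K j` for every `j`. Then `φ|_L` is a character of `L`. -/
theorem stmt_9 {G : Type*} [Group G] [TopologicalSpace G] [IsTopologicalGroup G]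
    [LocallyCompactSpace G] [FirstCountableTopology G]
    (K : ℕ → Subgroup G) (hKc : ∀ j, IsClosed (K j : Set G))
    (L : Subgroup G) (hLc : IsClosed (L : Set G))
    (hconv : @Filter.Tendsto ℕ (Closeds G)
      (fun j => ⟨(K j : Set G), hKc j⟩) atTop
      (@nhds _ (fellTopology G) ⟨(L : Set G), hLc⟩))
    (φ : G → ℂ) (hφ : Continuous φ)
    (habs : ∀ j, ∀ x ∈ K j, ‖φ x‖ = 1)
    (hmul : ∀ j, ∀ x ∈ K j, ∀ y ∈ K j, φ (x * y) = φ x * φ y) :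
    (∀ x ∈ L, ‖φ x‖ = 1) ∧
    (∀ x ∈ L, ∀ y ∈ L, φ (x * y) = φ x * φ y) :=
  stmt_9_general K hKc L hLc hconv φ hφ habs hmul
end

section
/- Let (s_n) be a real sequence with s_n → 0, (w_n) a sequence in (0,∞) with w_n → 0, and (θ_n) any sequence of real numbers. Then the set E = {(u₁,u₂) ∈ ℝ² : liminf_{n→∞} (s_n/w_n − u₁ sin θ_n − u₂ cos θ_n) ≤ 0} is either empty or infinite. -/
open Filter

/-!
If `u ∈ E`, the lower limit is attained either along the indices with `sin θ n ≥ 0` or along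
those with `sin θ n ≤ 0`. Moving `u₁` by any `t ≥ 0` in the direction of that sign only lowers
the terms along those indices, so the whole ray `u + t (±1, 0)` stays in `E`.
-/

/-- `liminf u f` is the minimum of the lower limits over `{a ≥ 0}` and over `{a < 0}`. -/
lemma exists_sign_bliminf_le {α β : Type*} [CompleteLinearOrder β] (f : Filter α) (u : α → β)
    (a : α → ℝ) : ∃ ε ∈ ({1, -1} : Set ℝ), bliminf u f (fun x => 0 ≤ ε * a x) ≤ liminf u f := by
  rw [← bliminf_inf_not (p := fun x => 0 ≤ a x)]
  rcases le_total (bliminf u f fun x => 0 ≤ a x) (bliminf u f fun x => ¬0 ≤ a x) with h | h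
  · exact ⟨1, by simp, by simp only [one_mul, inf_of_le_left h, le_refl]⟩
  · refine ⟨-1, by simp, ?_⟩
    rw [inf_of_le_right h]
    exact bliminf_antitone fun x hx => by linarith

lemma liminf_sub_mul_le_bliminf {α : Type*} (f : Filter α) (g a : α → ℝ) {t : ℝ} (ht : 0 ≤ t) :
    liminf (fun x => ((g x - t * a x : ℝ) : EReal)) f ≤
      bliminf (fun x => (g x : EReal)) f (fun x => 0 ≤ a x) := by
  rw [bliminf_eq_liminf]
  refine (liminf_le_liminf_of_le inf_le_left).trans
    (liminf_le_liminf (eventually_inf_principal.2 (Eventually.of_forall fun x hx => ?_)))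
  have hax : 0 ≤ a x := hx
  exact EReal.coe_le_coe_iff.2 (by nlinarith)

lemma exists_sign_liminf_sub_mul_le {α : Type*} (f : Filter α) (g a : α → ℝ) :
    ∃ ε ∈ ({1, -1} : Set ℝ), ∀ t : ℝ, 0 ≤ t →
      liminf (fun x => ((g x - t * (ε * a x) : ℝ) : EReal)) f ≤
        liminf (fun x => (g x : EReal)) f := by
  obtain ⟨ε, hε, hle⟩ := exists_sign_bliminf_le f (fun x => (g x : EReal)) a
  exact ⟨ε, hε, fun t ht => (liminf_sub_mul_le_bliminf f g (fun x => ε * a x) ht).trans hle⟩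

theorem stmt_10_general (s w θ : ℕ → ℝ) :
    {u : ℝ × ℝ | Filter.liminf
        (fun n => ((s n / w n - u.1 * Real.sin (θ n) - u.2 * Real.cos (θ n) : ℝ) : EReal))
        atTop ≤ (0 : EReal)} = ∅ ∨
    {u : ℝ × ℝ | Filter.liminf
        (fun n => ((s n / w n - u.1 * Real.sin (θ n) - u.2 * Real.cos (θ n) : ℝ) : EReal))
        atTop ≤ (0 : EReal)}.Infinite := by
  refine (Set.eq_empty_or_nonempty _).imp id fun ⟨u, hu⟩ => ?_
  obtain ⟨ε, hε, hle⟩ := exists_sign_liminf_sub_mul_le atTop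
    (fun n => s n / w n - u.1 * Real.sin (θ n) - u.2 * Real.cos (θ n)) (fun n => Real.sin (θ n))
  have hε0 : ε ≠ 0 := by rcases hε with rfl | rfl <;> norm_num
  refine Set.infinite_of_injective_forall_mem (f := fun k : ℕ => (u.1 + k * ε, u.2)) ?_ ?_
  · intro k l hkl
    exact_mod_cast mul_right_cancel₀ hε0 (add_left_cancel (congrArg Prod.fst hkl))
  · intro k
    refine le_trans (le_of_eq ?_) ((hle k k.cast_nonneg).trans hu)
    congr 1
    funext n
    congr 1
    ring

/-- If `s_n → 0`, `w_n ∈ (0,∞)` with `w_n → 0`, and `(θ_n)` is any sequence of reals, then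
`E = {(u₁,u₂) : liminf (s_n/w_n − u₁ sin θ_n − u₂ cos θ_n) ≤ 0}` is empty or infinite. -/
theorem stmt_10 (s w θ : ℕ → ℝ)
    (hs : Tendsto s atTop (nhds (0 : ℝ)))
    (hwpos : ∀ n, 0 < w n)
    (hw : Tendsto w atTop (nhds (0 : ℝ))) :
    {u : ℝ × ℝ | Filter.liminf
        (fun n => ((s n / w n - u.1 * Real.sin (θ n) - u.2 * Real.cos (θ n) : ℝ) : EReal))
        atTop ≤ (0 : EReal)} = ∅ ∨
    {u : ℝ × ℝ | Filter.liminf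
        (fun n => ((s n / w n - u.1 * Real.sin (θ n) - u.2 * Real.cos (θ n) : ℝ) : EReal))
        atTop ≤ (0 : EReal)}.Infinite :=
  stmt_10_general s w θ
end

section
/- Let g be a nilpotent Lie algebra, X ∈ g, and a ⊆ g an abelian ideal of codimension 1 with X ∉ a. Suppose the nilpotent operator D = (ad X)|_a : a → a has range of codimension 1 in a. Then g is isomorphic to the filiform Lie algebra f_m of dimension m = dim g, i.e. the Lie algebra with basis X₁,…,X_m satisfying [X_m, X_j] = X_{j−1} for j = 2,…,m−1 and all other brackets of basis elements zero. -/
/-!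
Write `n = dim a` and `D = (ad X)|_a`. `D` is nilpotent and, by rank–nullity, has a
one-dimensional kernel; since `dim ker D^k ≤ k · dim ker D`, this forces `D^(n-1) ≠ 0`. A vector
`v ∈ a` with `D^(n-1) v ≠ 0` spans a Jordan chain `D^(n-1) v, …, D v, v`, which is a basis of `a`,
and appending `X` gives a basis of `g`. In it `ad X` shifts the chain down, and the remaining
brackets vanish because `a` is abelian.
-/

open Module LinearMap

section LinearAlgebra

variable {K V W U : Type*} [Field K] [AddCommGroup V] [Module K V] [AddCommGroup W] [Module K W]
  [AddCommGroup U] [Module K U]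

theorem LinearMap.finrank_ker_comp_le [FiniteDimensional K V] [FiniteDimensional K W]
    (f : W →ₗ[K] U) (g : V →ₗ[K] W) :
    finrank K (ker (f ∘ₗ g)) ≤ finrank K (ker f) + finrank K (ker g) := by
  set φ := g.domRestrict (ker (f ∘ₗ g))
  have hrank := φ.finrank_range_add_finrank_ker
  have hrange : finrank K (range φ) ≤ finrank K (ker f) := by
    refine Submodule.finrank_mono ?_
    rintro _ ⟨x, rfl⟩
    exact x.2
  have hker : finrank K (ker φ) = finrank K (ker g) := by
    rw [ker_domRestrict]
    exact (Submodule.comapSubtypeEquivOfLe fun x hx => by simp_all).finrank_eq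
  omega

namespace Module.End

theorem finrank_ker_pow_le [FiniteDimensional K V] (f : End K V) (k : ℕ) :
    finrank K (ker (f ^ k)) ≤ k * finrank K (ker f) := by
  induction k with
  | zero => simp [one_eq_id]
  | succ k ih =>
    rw [pow_succ', mul_eq_comp, add_one_mul]
    have := finrank_ker_comp_le f (f ^ k)
    omega

theorem pow_finrank_sub_one_ne_zero [FiniteDimensional K V] {f : End K V}
    (hf : finrank K (ker f) = 1) : f ^ (finrank K V - 1) ≠ 0 := by
  intro h
  have hle := finrank_ker_pow_le f (finrank K V - 1)
  have hpos := Submodule.finrank_le (ker f)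
  rw [h, ker_zero, finrank_top, hf] at hle
  omega

theorem pow_finrank_eq_zero_of_isNilpotent [FiniteDimensional K V] {f : End K V}
    (hf : IsNilpotent f) : f ^ finrank K V = 0 := by
  simpa [hf.charpoly_eq_X_pow_finrank] using f.aeval_self_charpoly

theorem exists_mem_pow_apply_ne_zero_of_finrank_map_add_one {f : End K V} {p : Submodule K V}
    [FiniteDimensional K p] (hp : ∀ x ∈ p, f x ∈ p) (hf : IsNilpotent f)
    (hrange : finrank K (p.map f) + 1 = finrank K p) :
    ∃ v ∈ p, (f ^ finrank K p) v = 0 ∧ (f ^ (finrank K p - 1)) v ≠ 0 := by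
  set D := f.restrict hp
  have hker : finrank K (ker D) = 1 := by
    have := D.finrank_range_add_finrank_ker
    rw [range_restrict, (Submodule.comapSubtypeEquivOfLe _).finrank_eq] at this
    · omega
    · rintro _ ⟨x, hx, rfl⟩
      exact hp x hx
  obtain ⟨v, hv⟩ : ∃ v, (D ^ (finrank K p - 1)) v ≠ 0 := by
    by_contra! h
    exact pow_finrank_sub_one_ne_zero hker (LinearMap.ext h)
  have hD : ∀ k (w : p), ((D ^ k) w : V) = (f ^ k) w := fun k w => by rw [pow_restrict]; rfl
  refine ⟨v, v.2, ?_, ?_⟩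
  · rw [← hD, pow_finrank_eq_zero_of_isNilpotent (isNilpotent.restrict hp hf),
      LinearMap.zero_apply, Submodule.coe_zero]
  · rwa [← hD, ne_eq, Submodule.coe_eq_zero]

def jordanChain (f : End K V) (v : V) (n : ℕ) : Fin n → V :=
  fun i => (f ^ (n - 1 - i : ℕ)) v

theorem jordanChain_succ (f : End K V) (v : V) (n : ℕ) :
    f.jordanChain v (n + 1) = Fin.snoc (f.jordanChain (f v) n) v := by
  ext i
  refine Fin.lastCases ?_ (fun i => ?_) i
  · simp [jordanChain]
  · simp only [jordanChain, Fin.snoc_castSucc, Fin.val_castSucc, ← mul_apply, ← pow_succ]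
    congr 2
    omega

theorem apply_jordanChain_zero (f : End K V) (v : V) {n : ℕ} (hn : 0 < n) :
    f (f.jordanChain v n ⟨0, hn⟩) = (f ^ n) v := by
  simp only [jordanChain, ← mul_apply, ← pow_succ']
  congr 2
  omega

theorem apply_jordanChain (f : End K V) (v : V) {n i : ℕ} (hi : i < n) (hi0 : 0 < i) :
    f (f.jordanChain v n ⟨i, hi⟩) = f.jordanChain v n ⟨i - 1, by omega⟩ := by
  simp only [jordanChain, ← mul_apply, ← pow_succ']
  congr 2
  omega

theorem linearIndependent_jordanChain {f : End K V} {v : V} {n : ℕ} (hv : (f ^ n) v = 0)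
    (hv' : (f ^ (n - 1)) v ≠ 0) : LinearIndependent K (f.jordanChain v n) := by
  induction n generalizing v with
  | zero => exact linearIndependent_empty_type
  | succ n ih =>
    rw [jordanChain_succ, linearIndependent_finSnoc]
    constructor
    · rcases n with _ | n
      · exact linearIndependent_empty_type
      · exact ih (by rwa [← mul_apply, ← pow_succ]) (by rwa [← mul_apply, ← pow_succ])
    · intro hspan
      refine (Nat.add_sub_cancel n 1 ▸ hv') (Submodule.span_le.2 ?_ hspan : v ∈ ker (f ^ n))
      rintro _ ⟨i, rfl⟩
      simp only [SetLike.mem_coe, mem_ker, jordanChain, ← mul_apply, ← pow_succ, ← pow_add]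
      rw [show n + (n - 1 - i + 1) = n - 1 - i + (n + 1) by omega, pow_add, mul_apply, hv,
        map_zero]

end Module.End

end LinearAlgebra

open LieAlgebra

/-- Let `g` be a nilpotent Lie algebra, `a ⊆ g` an abelian ideal of codimension 1 and
`X ∈ g \ a`, such that the range of the nilpotent operator `D = (ad X)|_a : a → a` has
codimension 1 in `a`. Then `g` is isomorphic to the filiform Lie algebra `f_m`,
`m = dim g`, i.e. `g` has a basis `c 0, …, c (m-1)` (corresponding to `X₁, …, X_m`) with
`[X_m, X_j] = X_{j-1}` for `j = 2, …, m-1` and all other brackets of basis elements zero. -/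
theorem stmt_11 {L : Type*} [LieRing L] [LieAlgebra ℝ L] [FiniteDimensional ℝ L]
    (hnil : LieRing.IsNilpotent L)
    (a : LieIdeal ℝ L)
    (habel : ∀ x ∈ a, ∀ y ∈ a, ⁅x, y⁆ = (0 : L))
    (hcodim : finrank ℝ L = finrank ℝ a.toSubmodule + 1)
    (X : L) (hX : X ∉ a)
    (hrange : finrank ℝ (Submodule.map (LieAlgebra.ad ℝ L X) a.toSubmodule) + 1 =
      finrank ℝ a.toSubmodule)
    (m : ℕ) (hm : finrank ℝ L = m) (hm3 : 3 ≤ m) :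
    ∃ c : Basis (Fin m) ℝ L,
      (⁅c ⟨m - 1, by omega⟩, c ⟨0, by omega⟩⁆ = 0) ∧
      (∀ j : Fin m, 1 ≤ j.val → j.val ≤ m - 2 →
        ⁅c ⟨m - 1, by omega⟩, c j⁆ = c ⟨j.val - 1, by omega⟩) ∧
      (∀ i j : Fin m, i.val ≤ m - 2 → j.val ≤ m - 2 → ⁅c i, c j⁆ = 0) := by
  obtain ⟨n, rfl⟩ : ∃ n, m = n + 1 := ⟨m - 1, by omega⟩
  have hmaps : ∀ x ∈ a.toSubmodule, ad ℝ L X x ∈ a.toSubmodule := fun x hx => a.lie_mem hx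
  obtain ⟨v, hva, hvn, hvn'⟩ :=
    Module.End.exists_mem_pow_apply_ne_zero_of_finrank_map_add_one hmaps
      (LieModule.isNilpotent_toEnd_of_isNilpotent ℝ L L X) hrange
  rw [show finrank ℝ a.toSubmodule = n by omega] at hvn hvn'
  set chain := (ad ℝ L X).jordanChain v n
  have hchain : ∀ i, chain i ∈ a := fun i => Module.End.pow_apply_mem_of_forall_mem _ hmaps v hva
  have hli : LinearIndependent ℝ (Fin.snoc chain X) := linearIndependent_finSnoc.2
    ⟨Module.End.linearIndependent_jordanChain hvn hvn',
      fun h => hX (Submodule.span_le.2 (Set.range_subset_iff.2 hchain) h)⟩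
  let c := basisOfLinearIndependentOfCardEqFinrank hli (by simp [hm])
  have hc_coe : ⇑c = Fin.snoc chain X := coe_basisOfLinearIndependentOfCardEqFinrank _ _
  have hcX : ∀ h, c ⟨n + 1 - 1, h⟩ = X := fun _ => by rw [hc_coe]; exact Fin.snoc_last _ _
  have hc : ∀ j (hj : j < n), c ⟨j, by omega⟩ = chain ⟨j, hj⟩ := fun j hj => by
    rw [hc_coe]; exact Fin.snoc_castSucc (α := fun _ => L) X chain ⟨j, hj⟩
  refine ⟨c, ?_, fun j hj1 hj2 => ?_, fun i j hi hj => ?_⟩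
  · rw [hcX, hc 0 (by omega), ← ad_apply (R := ℝ), Module.End.apply_jordanChain_zero, hvn]
  · obtain ⟨j, hj⟩ := j
    dsimp only at hj1 hj2
    rw [hcX, hc j (by omega), hc (j - 1) (by omega), ← ad_apply (R := ℝ),
      Module.End.apply_jordanChain _ _ _ hj1]
  · obtain ⟨i, hi'⟩ := i
    obtain ⟨j, hj'⟩ := j
    dsimp only at hi hj
    rw [hc i (by omega), hc j (by omega)]
    exact habel _ (hchain _) _ (hchain _)
end

section
/- Let g = h₃ × h₅ be the direct product of the 3-dimensional and 5-dimensional Heisenberg Lie algebras. Then g is a 2-step nilpotent Lie algebra of dimension 8 which admits both a coadjoint isotropy subalgebra of codimension 2 and one of codimension 4; equivalently, there exist ξ, η ∈ g* not vanishing on [g,g] with dim g(ξ) = 6 and dim g(η) = 4. In particular g is not of class T. -/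
/-!
In the basis `b` the bracket is `⁅x, y⁆ = ω₂(x, y) • b 2 + ω₇(x, y) • b 7` with
`ω₂ = dx₀ ∧ dx₁` and `ω₇ = dx₃ ∧ dx₅ + dx₄ ∧ dx₆`. As `b 2` and `b 7` are central, the algebra is
2-step nilpotent. The isotropy algebra of `b.coord 2` (resp. `b.coord 7`) is the radical of `ω₂`
(resp. `ω₇`); both forms are in Darboux normal form, so their radicals are spanned by the basis
vectors not involved in them and have codimension 2 (resp. 4). Both functionals are nonzero on
`b 2, b 7 ∈ [g, g]`, so two isotropy dimensions occur and `g` is not of class `T`.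
-/

open Module

open Submodule Set Function

theorem Module.Basis.finrank_span_image {ι R M : Type*} [CommRing R] [Nontrivial R]
    [AddCommGroup M] [Module R M] (b : Basis ι R M) (s : Set ι) [Fintype s] :
    finrank R (span R (b '' s)) = Fintype.card s := by
  rw [image_eq_range]
  exact finrank_span_eq_card (b.linearIndependent.comp _ Subtype.val_injective)

section Darboux

variable {ι κ L : Type*} [Fintype κ] [LieRing L] [LieAlgebra ℝ L] (b : Basis ι ℝ L)

def IsDarbouxFunctional (p q : κ → ι) (ξ : Module.Dual ℝ L) : Prop :=
  ∀ x y, ξ ⁅x, y⁆ = ∑ k, (b.repr x (p k) * b.repr y (q k) - b.repr x (q k) * b.repr y (p k))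

variable {p q : κ → ι} {ξ : Module.Dual ℝ L}

theorem coadjointIsotropy_eq_span_of_darboux (hpq : Injective (Sum.elim p q))
    (hξ : IsDarbouxFunctional b p q ξ) :
    coadjointIsotropy ξ = span ℝ (b '' (range (Sum.elim p q))ᶜ) := by
  classical
  unfold IsDarbouxFunctional at hξ
  have hp : Injective p := hpq.comp Sum.inl_injective
  have hq : Injective q := hpq.comp Sum.inr_injective
  have hpq_ne : ∀ k l, p k ≠ q l := fun k l => hpq.ne Sum.inl_ne_inr
  ext x
  rw [b.mem_span_image, subset_compl_comm, range_subset_iff]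
  simp only [mem_compl_iff, Finset.mem_coe, Finsupp.mem_support_iff, not_not, Sum.forall,
    Sum.elim_inl, Sum.elim_inr]
  refine ⟨fun hx => ⟨fun k => ?_, fun k => ?_⟩, fun ⟨hxp, hxq⟩ y => ?_⟩
  · simpa [hξ, Finsupp.single_apply, hq.eq_iff, (hpq_ne _ _).symm] using hx (b (q k))
  · simpa [hξ, Finsupp.single_apply, hp.eq_iff, hpq_ne] using hx (b (p k))
  · simp [hξ, hxp, hxq]

theorem finrank_coadjointIsotropy_of_darboux [Fintype ι] (hpq : Injective (Sum.elim p q))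
    (hξ : IsDarbouxFunctional b p q ξ) :
    finrank ℝ (coadjointIsotropy ξ) = Fintype.card ι - 2 * Fintype.card κ := by
  classical
  rw [coadjointIsotropy_eq_span_of_darboux b hpq hξ, b.finrank_span_image, Fintype.card_compl_set,
    card_range_of_injective hpq, Fintype.card_sum, two_mul]

end Darboux

theorem not_forall_derivedSeries_one_eq_zero {L : Type*} [LieRing L] [LieAlgebra ℝ L]
    {ξ : Module.Dual ℝ L} {x y : L} (h : ξ ⁅x, y⁆ ≠ 0) :
    ¬ ∀ z ∈ LieAlgebra.derivedSeries ℝ L 1, ξ z = 0 := by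
  refine fun hξ => h (hξ _ ?_)
  rw [LieAlgebra.derivedSeries_def, LieAlgebra.derivedSeriesOfIdeal_succ,
    LieAlgebra.derivedSeriesOfIdeal_zero]
  exact LieSubmodule.lie_mem_lie (LieSubmodule.mem_top _) (LieSubmodule.mem_top _)

theorem not_isClassT_of_finrank_ne {L : Type*} [LieRing L] [LieAlgebra ℝ L]
    {ξ η : Module.Dual ℝ L}
    (hξ : ¬ ∀ x ∈ LieAlgebra.derivedSeries ℝ L 1, ξ x = 0)
    (hη : ¬ ∀ x ∈ LieAlgebra.derivedSeries ℝ L 1, η x = 0)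
    (hne : finrank ℝ (coadjointIsotropy ξ) ≠ finrank ℝ (coadjointIsotropy η)) :
    ¬ IsClassT L :=
  fun hT => hne ((hT ξ hξ).trans (hT η hη).symm)

section Heisenberg

variable {L : Type*} [LieRing L] [LieAlgebra ℝ L] (b : Basis (Fin 8) ℝ L)

theorem lie_eq_h3h5 (h1 : ⁅b 0, b 1⁆ = b 2) (h2 : ⁅b 3, b 5⁆ = b 7) (h3 : ⁅b 4, b 6⁆ = b 7)
    (h0 : ∀ i j : Fin 8, i < j → (i, j) ≠ (0, 1) → (i, j) ≠ (3, 5) → (i, j) ≠ (4, 6) →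
      ⁅b i, b j⁆ = 0) (x y : L) :
    ⁅x, y⁆ = (b.repr x 0 * b.repr y 1 - b.repr x 1 * b.repr y 0) • b 2 +
      (b.repr x 3 * b.repr y 5 - b.repr x 5 * b.repr y 3 +
        b.repr x 4 * b.repr y 6 - b.repr x 6 * b.repr y 4) • b 7 := by
  refine LinearMap.congr_fun₂ (?_ : (LieModule.toEnd ℝ L L : L →ₗ[ℝ] L →ₗ[ℝ] L) =
    LinearMap.mk₂ ℝ
      (fun x y => (b.repr x 0 * b.repr y 1 - b.repr x 1 * b.repr y 0) • b 2 +
        (b.repr x 3 * b.repr y 5 - b.repr x 5 * b.repr y 3 +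
          b.repr x 4 * b.repr y 6 - b.repr x 6 * b.repr y 4) • b 7)
      (by intros; simp only [map_add, Finsupp.add_apply]; module)
      (by intros; simp only [map_smul, Finsupp.smul_apply, smul_eq_mul]; module)
      (by intros; simp only [map_add, Finsupp.add_apply]; module)
      (by intros; simp only [map_smul, Finsupp.smul_apply, smul_eq_mul]; module)) x y
  refine LinearMap.ext_basis b b fun i j => ?_
  simp only [LinearMap.mk₂_apply, LieHom.coe_toLinearMap, LieModule.toEnd_apply_apply,
    Basis.repr_self, Finsupp.single_apply]
  clear x y
  fin_cases i <;> fin_cases j <;> simp <;>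
    first
    | assumption
    | exact h0 _ _ (by decide) (by decide) (by decide) (by decide)
    | rw [← lie_skew, neg_inj]; assumption
    | rw [← lie_skew, neg_eq_zero]; exact h0 _ _ (by decide) (by decide) (by decide) (by decide)

end Heisenberg

theorem stmt_15_general {L : Type*} [LieRing L] [LieAlgebra ℝ L]
    (b : Basis (Fin 8) ℝ L)
    (h1 : ⁅b 0, b 1⁆ = b 2) (h2 : ⁅b 3, b 5⁆ = b 7) (h3 : ⁅b 4, b 6⁆ = b 7)
    (h0 : ∀ i j : Fin 8, i < j → (i, j) ≠ (0, 1) → (i, j) ≠ (3, 5) → (i, j) ≠ (4, 6) →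
      ⁅b i, b j⁆ = 0) :
    (∀ x y z : L, ⁅x, ⁅y, z⁆⁆ = 0) ∧
    finrank ℝ L = 8 ∧
    (∃ ξ : Module.Dual ℝ L,
      ¬ (∀ x ∈ LieAlgebra.derivedSeries ℝ L 1, ξ x = 0) ∧
        finrank ℝ (coadjointIsotropy ξ) = 6) ∧
    (∃ η : Module.Dual ℝ L,
      ¬ (∀ x ∈ LieAlgebra.derivedSeries ℝ L 1, η x = 0) ∧
        finrank ℝ (coadjointIsotropy η) = 4) ∧
    ¬ IsClassT L := by
  have hL := lie_eq_h3h5 b h1 h2 h3 h0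
  have hξ : IsDarbouxFunctional b ![0] ![1] (b.coord 2) := fun x y => by simp [hL]
  have hη : IsDarbouxFunctional b ![3, 4] ![5, 6] (b.coord 7) := fun x y => by
    simp [hL, Fin.sum_univ_two]
    ring
  have dξ := finrank_coadjointIsotropy_of_darboux b (by decide) hξ
  have dη := finrank_coadjointIsotropy_of_darboux b (by decide) hη
  have nξ : ¬ ∀ x ∈ LieAlgebra.derivedSeries ℝ L 1, b.coord 2 x = 0 :=
    not_forall_derivedSeries_one_eq_zero (x := b 0) (y := b 1) (by simp [h1])
  have nη : ¬ ∀ x ∈ LieAlgebra.derivedSeries ℝ L 1, b.coord 7 x = 0 :=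
    not_forall_derivedSeries_one_eq_zero (x := b 3) (y := b 5) (by simp [h2])
  refine ⟨fun x y z => by simp [hL], by simp [finrank_eq_card_basis b], ⟨_, nξ, dξ⟩,
    ⟨_, nη, dη⟩, not_isClassT_of_finrank_ne nξ nη (by rw [dξ, dη]; decide)⟩

/-- The direct product `h₃ × h₅` of the 3- and 5-dimensional Heisenberg Lie algebras
(basis `b 0,…,b 7` with `⁅b 0, b 1⁆ = b 2`, `⁅b 3, b 5⁆ = b 7`, `⁅b 4, b 6⁆ = b 7`, all other
brackets of basis elements zero) is a 2-step nilpotent Lie algebra of dimension 8 admitting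
coadjoint isotropy subalgebras of codimension 2 and of codimension 4 at functionals not
vanishing on `[g,g]`; in particular it is not of class `T`. -/
theorem stmt_15 {L : Type*} [LieRing L] [LieAlgebra ℝ L] [FiniteDimensional ℝ L]
    (b : Basis (Fin 8) ℝ L)
    (h1 : ⁅b 0, b 1⁆ = b 2) (h2 : ⁅b 3, b 5⁆ = b 7) (h3 : ⁅b 4, b 6⁆ = b 7)
    (h0 : ∀ i j : Fin 8, i < j → (i, j) ≠ (0, 1) → (i, j) ≠ (3, 5) → (i, j) ≠ (4, 6) →
      ⁅b i, b j⁆ = 0) :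
    (∀ x y z : L, ⁅x, ⁅y, z⁆⁆ = 0) ∧
    finrank ℝ L = 8 ∧
    (∃ ξ : Module.Dual ℝ L,
      ¬ (∀ x ∈ LieAlgebra.derivedSeries ℝ L 1, ξ x = 0) ∧
        finrank ℝ (coadjointIsotropy ξ) = 6) ∧
    (∃ η : Module.Dual ℝ L,
      ¬ (∀ x ∈ LieAlgebra.derivedSeries ℝ L 1, η x = 0) ∧
        finrank ℝ (coadjointIsotropy η) = 4) ∧
    ¬ IsClassT L :=
  stmt_15_general b h1 h2 h3 h0
end

section
/- For the filiform Lie algebra f_n (n ≥ 3), with basis X₁,…,X_n and brackets [X_n, X_j] = X_{j−1} for 2 ≤ j ≤ n−1, one has ind f_n = n − 2; that is, the minimum over ξ ∈ f_n* of dim{X : ξ([X, f_n]) = 0} equals n − 2. -/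
open Module

/-! If a linear form `c` with `c e = 1` has an abelian kernel (for `f_n`: `c = X_n^*`, `e = X_n`),
then `[X, Y] = c(X) [e, Y] - c(Y) [e, X]`, so `ξ([·,·])` is the wedge of `c` and `ξ ∘ ad e`
and has rank at most `2`. Since `(ξ ∘ ad e)(e) = 0`, the rank is exactly `2` whenever
`ξ ∘ ad e ≠ 0`, which some `ξ` achieves as soon as `ad e ≠ 0`, e.g. `[X_n, X_2] = X_1`. -/

theorem LinearMap.finrank_sub_two_le_finrank_ker {K V : Type*} [Field K] [AddCommGroup V]
    [Module K V] [FiniteDimensional K V] (Φ : V →ₗ[K] K × K) :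
    finrank K V - 2 ≤ finrank K (LinearMap.ker Φ) := by
  have hrange : finrank K (LinearMap.range Φ) ≤ 2 := by
    simpa using Submodule.finrank_le (LinearMap.range Φ)
  have := LinearMap.finrank_range_add_finrank_ker Φ
  omega

section AbelianHyperplane

variable {L : Type*} [LieRing L] [LieAlgebra ℝ L] {c : Module.Dual ℝ L} {e : L}

theorem lie_eq_smul_lie_sub_smul_lie (hce : c e = 1)
    (habel : ∀ X Y : L, c X = 0 → c Y = 0 → ⁅X, Y⁆ = 0) (X Y : L) :
    ⁅X, Y⁆ = c X • ⁅e, Y⁆ - c Y • ⁅e, X⁆ := by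
  have h := habel (X - c X • e) (Y - c Y • e) (by simp [hce]) (by simp [hce])
  simp only [sub_lie, lie_sub, smul_lie, lie_smul, lie_self, smul_zero, sub_zero] at h
  rw [← lie_skew e X]
  linear_combination (norm := module) h

theorem mem_coadjointIsotropy_iff_of_abelian_hyperplane (hce : c e = 1)
    (habel : ∀ X Y : L, c X = 0 → c Y = 0 → ⁅X, Y⁆ = 0) (ξ : Module.Dual ℝ L) (X : L) :
    X ∈ coadjointIsotropy ξ ↔ ∀ Y, c X * ξ ⁅e, Y⁆ = c Y * ξ ⁅e, X⁆ := by
  refine forall_congr' fun Y => ?_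
  rw [lie_eq_smul_lie_sub_smul_lie hce habel, map_sub, map_smul, map_smul, smul_eq_mul,
    smul_eq_mul, sub_eq_zero]

theorem ker_prod_le_coadjointIsotropy (hce : c e = 1)
    (habel : ∀ X Y : L, c X = 0 → c Y = 0 → ⁅X, Y⁆ = 0) (ξ : Module.Dual ℝ L) :
    LinearMap.ker (c.prod (ξ ∘ₗ LieAlgebra.ad ℝ L e)) ≤ coadjointIsotropy ξ := by
  intro X hX
  obtain ⟨hcX, hφX⟩ : c X = 0 ∧ ξ ⁅e, X⁆ = 0 := by simpa using hX
  rw [mem_coadjointIsotropy_iff_of_abelian_hyperplane hce habel]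
  simp [hcX, hφX]

theorem coadjointIsotropy_eq_ker_prod (hce : c e = 1)
    (habel : ∀ X Y : L, c X = 0 → c Y = 0 → ⁅X, Y⁆ = 0) {ξ : Module.Dual ℝ L} {Y : L}
    (hY : ξ ⁅e, Y⁆ ≠ 0) :
    coadjointIsotropy ξ = LinearMap.ker (c.prod (ξ ∘ₗ LieAlgebra.ad ℝ L e)) := by
  refine le_antisymm (fun X hX => ?_) (ker_prod_le_coadjointIsotropy hce habel ξ)
  rw [mem_coadjointIsotropy_iff_of_abelian_hyperplane hce habel] at hX
  have hφX : ξ ⁅e, X⁆ = 0 := by simpa [hce] using (hX e).symm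
  have hcX : c X = 0 := by simpa [hφX, hY] using hX Y
  simp [hcX, hφX]

theorem surjective_prod_comp_ad (hce : c e = 1) {ξ : Module.Dual ℝ L} {Y : L}
    (hY : ξ ⁅e, Y⁆ ≠ 0) :
    Function.Surjective (c.prod (ξ ∘ₗ LieAlgebra.ad ℝ L e)) := by
  rintro ⟨s, t⟩
  refine ⟨s • e + t • (ξ ⁅e, Y⁆)⁻¹ • (Y - c Y • e), ?_⟩
  simp [hce, hY]

variable [FiniteDimensional ℝ L]

theorem finrank_sub_two_le_finrank_coadjointIsotropy (hce : c e = 1)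
    (habel : ∀ X Y : L, c X = 0 → c Y = 0 → ⁅X, Y⁆ = 0) (ξ : Module.Dual ℝ L) :
    finrank ℝ L - 2 ≤ finrank ℝ (coadjointIsotropy ξ) :=
  (LinearMap.finrank_sub_two_le_finrank_ker _).trans
    (Submodule.finrank_mono (ker_prod_le_coadjointIsotropy hce habel ξ))

theorem finrank_coadjointIsotropy_of_abelian_hyperplane (hce : c e = 1)
    (habel : ∀ X Y : L, c X = 0 → c Y = 0 → ⁅X, Y⁆ = 0) {ξ : Module.Dual ℝ L} {Y : L}
    (hY : ξ ⁅e, Y⁆ ≠ 0) :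
    finrank ℝ (coadjointIsotropy ξ) = finrank ℝ L - 2 := by
  have := LinearMap.finrank_range_add_finrank_ker (c.prod (ξ ∘ₗ LieAlgebra.ad ℝ L e))
  rw [LinearMap.range_eq_top.mpr (surjective_prod_comp_ad hce hY), finrank_top,
    Module.finrank_prod, Module.finrank_self] at this
  rw [coadjointIsotropy_eq_ker_prod hce habel hY]
  omega

theorem lieIndex_eq_finrank_sub_two (hce : c e = 1)
    (habel : ∀ X Y : L, c X = 0 → c Y = 0 → ⁅X, Y⁆ = 0) {Y : L} (hY : ⁅e, Y⁆ ≠ 0) :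
    lieIndex L = finrank ℝ L - 2 := by
  obtain ⟨ξ, hξ⟩ := Module.Projective.exists_dual_ne_zero ℝ hY
  refine le_antisymm
    (Nat.sInf_le ⟨ξ, finrank_coadjointIsotropy_of_abelian_hyperplane hce habel hξ⟩)
    (le_csInf ⟨_, Set.mem_range_self 0⟩ ?_)
  rintro _ ⟨ξ, rfl⟩
  exact finrank_sub_two_le_finrank_coadjointIsotropy hce habel ξ

end AbelianHyperplane

theorem Module.Basis.lie_eq_zero_of_coord_eq_zero {R L ι : Type*} [CommRing R] [LieRing L]
    [LieAlgebra R L] [Fintype ι] (b : Basis ι R L) {N : ι}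
    (h : ∀ i j, i ≠ N → j ≠ N → ⁅b i, b j⁆ = 0) {X Y : L} (hX : b.coord N X = 0)
    (hY : b.coord N Y = 0) : ⁅X, Y⁆ = 0 := by
  rw [← b.sum_repr X, ← b.sum_repr Y]
  simp only [sum_lie, lie_sum, smul_lie, lie_smul, Finset.smul_sum]
  refine Finset.sum_eq_zero fun j _ => Finset.sum_eq_zero fun i _ => ?_
  by_cases hi : i = N
  · simp_all
  by_cases hj : j = N
  · simp_all
  simp [h i j hi hj]

-- `b i` is `X_{i+1}`, so `X_n` is `b ⟨n - 1, _⟩`.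
/-- For the filiform Lie algebra `f_n` (`n ≥ 3`; basis `X₁,…,X_n` with `[X_n,X_j] = X_{j−1}`
for `j = 1,…,n−1`, `X₀ := 0`, and all other brackets of basis elements zero; here `b i`
corresponds to `X_{i+1}`), one has `ind f_n = n − 2`. -/
theorem stmt_18 {L : Type*} [LieRing L] [LieAlgebra ℝ L] [FiniteDimensional ℝ L]
    (n : ℕ) (hn : 3 ≤ n) (b : Basis (Fin n) ℝ L)
    (htop : ∀ j : Fin n, 1 ≤ j.val → j.val ≤ n - 2 →
      ⁅b ⟨n - 1, by omega⟩, b j⁆ = b ⟨j.val - 1, by omega⟩)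
    (h0 : ∀ i j : Fin n, i.val ≤ n - 2 → j.val ≤ n - 2 → ⁅b i, b j⁆ = 0) :
    lieIndex L = n - 2 := by
  let N : Fin n := ⟨n - 1, by omega⟩
  have hle_of_ne (i : Fin n) (hi : i ≠ N) : i.val ≤ n - 2 := by
    have : i.val ≠ n - 1 := fun h => hi (Fin.ext h)
    omega
  have habel : ∀ X Y : L, b.coord N X = 0 → b.coord N Y = 0 → ⁅X, Y⁆ = 0 := fun _ _ =>
    b.lie_eq_zero_of_coord_eq_zero fun i j hi hj => h0 i j (hle_of_ne i hi) (hle_of_ne j hj)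
  have hnonabelian : ⁅b N, b ⟨1, by omega⟩⁆ ≠ 0 := by
    rw [htop ⟨1, by omega⟩ le_rfl (by simp only; omega)]
    exact b.ne_zero _
  rw [lieIndex_eq_finrank_sub_two (by simp) habel hnonabelian, finrank_eq_card_basis b,
    Fintype.card_fin]
end
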